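/- arXiv:0802.1816 — 3 statements merged into one kernel-verified Lean document; each statement's English description precedes it below -/
import Mathlib

section
/- Symmetrization: for every n-variate real multilinear polynomial p of degree d, there exists a univariate real polynomial q of degree at most d such that for every k ∈ {0,…,n}, q(k) equals the average of p(x) over all x ∈ {0,1}^n with Hamming weight |x| = k. -/
open Finset Real

/-- Evaluation of the multilinear polynomial with coefficients `a` on a Boolean input. -/
def evalML (n : ℕ) (a : Finset (Fin n) → ℝ) (x : Fin n → Bool) : ℝ :=
  ∑ S : Finset (Fin n), a S * ∏ i ∈ S, (if x i then (1 : ℝ) else 0)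

/-- The ε-approximate degree of `f : {0,1}^n → ℝ`: the minimal degree of an
n-variate real multilinear polynomial approximating `f` to within `ε` pointwise. -/
noncomputable def degEps (n : ℕ) (ε : ℝ) (f : (Fin n → Bool) → ℝ) : ℕ :=
  sInf {d | ∃ a : Finset (Fin n) → ℝ,
    (∀ S, a S ≠ 0 → S.card ≤ d) ∧ ∀ x, |evalML n a x - f x| ≤ ε}

/-- Hamming weight of a Boolean string. -/
def wt {n : ℕ} (x : Fin n → Bool) : ℕ := (Finset.univ.filter (fun i => x i = true)).card

lemma count_lemma (n k : ℕ) (S : Finset (Fin n)) (hk : S.card ≤ k) :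
    (Finset.univ.filter fun x : Fin n → Bool => wt x = k ∧ ∀ i ∈ S, x i = true).card
      = (n - S.card).choose (k - S.card) := by
  unfold wt
  have h2 : (Finset.univ \ S).card = n - S.card := by
    simp [Finset.card_sdiff_of_subset (Finset.subset_univ S)]
  rw [← h2, ← Finset.card_powersetCard]
  apply Finset.card_nbij' (i := fun x => (Finset.univ.filter fun i => x i = true) \ S)
    (j := fun U => fun i => decide (i ∈ U ∪ S))
  · intro x hx
    simp only [Finset.mem_coe, Finset.mem_filter, Finset.mem_univ, true_and] at hx
    obtain ⟨hw, hS⟩ := hx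
    have hsub : S ⊆ Finset.univ.filter fun i => x i = true := by
      intro i hi; simp [hS i hi]
    simp only [Finset.mem_coe, Finset.mem_powersetCard]
    exact ⟨Finset.sdiff_subset_sdiff (Finset.subset_univ _) Finset.Subset.rfl,
      by rw [Finset.card_sdiff_of_subset hsub, hw]⟩
  · intro U hU
    simp only [Finset.mem_coe, Finset.mem_powersetCard] at hU
    obtain ⟨hUsub, hUcard⟩ := hU
    have hdisj : Disjoint U S := Finset.disjoint_left.2 fun i hi =>
      (Finset.mem_sdiff.1 (hUsub hi)).2
    simp only [Finset.mem_coe, Finset.mem_filter, Finset.mem_univ, true_and]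
    have heq : (Finset.univ.filter fun i => decide (i ∈ U ∪ S) = true) = U ∪ S := by
      ext i; simp
    refine ⟨?_, fun i hi => by simp [Finset.mem_union, hi]⟩
    rw [heq, Finset.card_union_of_disjoint hdisj, hUcard]
    omega
  · intro x hx
    simp only [Finset.mem_coe, Finset.mem_filter, Finset.mem_univ, true_and] at hx
    funext i
    have hsub : S ⊆ Finset.univ.filter fun j => x j = true := by
      intro j hj; simp [hx.2 j hj]
    beta_reduce
    rw [Finset.sdiff_union_of_subset hsub]
    simp only [Finset.mem_filter, Finset.mem_univ, true_and]
    cases h : x i <;> simp [h]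
  · intro U hU
    simp only [Finset.mem_coe, Finset.mem_powersetCard] at hU
    have heq : (Finset.univ.filter fun i => decide (i ∈ U ∪ S) = true) = U ∪ S := by
      ext i; simp
    beta_reduce
    rw [heq, Finset.union_sdiff_right]
    exact Finset.sdiff_eq_self_of_disjoint (Finset.disjoint_left.2 fun i hi =>
      (Finset.mem_sdiff.1 (hU.1 hi)).2)

open Polynomial in
/-- Symmetrization: for every n-variate multilinear polynomial of degree at most `d`
there is a univariate polynomial `q` of degree at most `d` whose value at `k` is the
average of `p` over the Boolean strings of Hamming weight `k`. -/
theorem symmetrization (n d : ℕ) (a : Finset (Fin n) → ℝ)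
    (hd : ∀ S, a S ≠ 0 → S.card ≤ d) :
    ∃ q : Polynomial ℝ, q.natDegree ≤ d ∧ ∀ k ≤ n,
      q.eval (k : ℝ) =
        (∑ x ∈ Finset.univ.filter (fun x : Fin n → Bool => wt x = k), evalML n a x) /
          (n.choose k) := by
  refine ⟨∑ S : Finset (Fin n),
      a S • ((((n.choose S.card : ℝ) * ((S.card).factorial : ℝ))⁻¹ : ℝ) •
        descPochhammer ℝ S.card), ?_, ?_⟩
  · apply Polynomial.natDegree_sum_le_of_forall_le
    intro S _
    by_cases h : a S = 0
    · simp [h]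
    · refine (Polynomial.natDegree_smul_le _ _).trans
        ((Polynomial.natDegree_smul_le _ _).trans ?_)
      rw [descPochhammer_natDegree]
      exact hd S h
  · intro k hk
    have hswap : (∑ x ∈ Finset.univ.filter (fun x : Fin n → Bool => wt x = k), evalML n a x)
        = ∑ S : Finset (Fin n), a S *
            ((Finset.univ.filter fun x : Fin n → Bool =>
              wt x = k ∧ ∀ i ∈ S, x i = true).card : ℝ) := by
      unfold evalML
      rw [Finset.sum_comm]
      refine Finset.sum_congr rfl fun S _ => ?_
      rw [← Finset.mul_sum]
      congr 1
      simp only [Finset.prod_boole]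
      rw [Finset.sum_filter, Finset.card_filter]
      push_cast
      refine Finset.sum_congr rfl fun x _ => ?_
      by_cases h1 : wt x = k <;> by_cases h2 : ∀ i ∈ S, x i = true <;> simp [h1, h2]
    rw [hswap, Polynomial.eval_finset_sum, Finset.sum_div]
    refine Finset.sum_congr rfl fun S _ => ?_
    rw [Polynomial.eval_smul, Polynomial.eval_smul, smul_eq_mul, smul_eq_mul,
      descPochhammer_eval_eq_descFactorial]
    have hsn : S.card ≤ n := by
      simpa using Finset.card_le_card (Finset.subset_univ S)
    have hcn : (0:ℝ) < n.choose S.card := by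
      exact_mod_cast Nat.cast_pos.2 (Nat.choose_pos hsn)
    have hck : (0:ℝ) < n.choose k := by
      exact_mod_cast Nat.cast_pos.2 (Nat.choose_pos hk)
    have hfac : (0:ℝ) < (S.card).factorial := by
      exact_mod_cast Nat.cast_pos.2 (S.card).factorial_pos
    by_cases hsk : S.card ≤ k
    · rw [count_lemma n k S hsk]
      have hid : n.choose k * k.choose S.card
          = n.choose S.card * (n - S.card).choose (k - S.card) := Nat.choose_mul hsk
      have hdesc : k.descFactorial S.card = (S.card).factorial * k.choose S.card :=
        Nat.descFactorial_eq_factorial_mul_choose k S.card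
      rw [hdesc]
      have hidR : (n.choose k : ℝ) * k.choose S.card
          = (n.choose S.card : ℝ) * (n - S.card).choose (k - S.card) := by
        exact_mod_cast hid
      push_cast
      field_simp
      linear_combination (a S) * hidR
    · push_neg at hsk
      have h0 : k.descFactorial S.card = 0 := Nat.descFactorial_eq_zero_iff_lt.2 hsk
      have hempty : (Finset.univ.filter fun x : Fin n → Bool =>
          wt x = k ∧ ∀ i ∈ S, x i = true) = ∅ := by
        rw [Finset.filter_eq_empty_iff]
        intro x _
        rintro ⟨hw, hS⟩
        have : S ⊆ Finset.univ.filter fun i => x i = true := by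
          intro i hi; simp [hS i hi]
        have := Finset.card_le_card this
        rw [← wt, hw] at this
        omega
      rw [h0, hempty]
      simp
end

section
/- For θ ∈ (0, π/2], there exists a natural number T ≤ π/(4θ) such that |(2T+1)θ − π/2| ≤ θ, and hence sin((2T+1)θ)² ≥ cos(θ)². -/
open Finset Real

/-- For θ ∈ (0, π/2] there is a number of Grover iterations T ≤ π/(4θ) with
(2T+1)θ within θ of π/2, hence sin((2T+1)θ)² ≥ cos(θ)². -/
theorem grover_iterations_exist (θ : ℝ) (h1 : 0 < θ) (h2 : θ ≤ π / 2) :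
    ∃ T : ℕ, (T : ℝ) ≤ π / (4 * θ) ∧
      |(2 * (T : ℝ) + 1) * θ - π / 2| ≤ θ ∧
      Real.cos θ ^ 2 ≤ Real.sin ((2 * (T : ℝ) + 1) * θ) ^ 2 := by
  set r : ℝ := π / (4 * θ) with hr
  have hrpos : 0 ≤ r := by positivity
  refine ⟨⌊r⌋₊, Nat.floor_le hrpos, ?_⟩
  have hfl : (⌊r⌋₊ : ℝ) ≤ r := Nat.floor_le hrpos
  have hfu : r < (⌊r⌋₊ : ℝ) + 1 := Nat.lt_floor_add_one r
  have hpi : π / 2 = 2 * r * θ := by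
    field_simp [hr]
    rw [hr, mul_assoc, div_mul_eq_mul_div, mul_div_assoc', eq_div_iff (by positivity)]
    ring
  have habs : |(2 * (⌊r⌋₊ : ℝ) + 1) * θ - π / 2| ≤ θ := by
    rw [hpi, abs_le]
    constructor <;> nlinarith
  refine ⟨habs, ?_⟩
  set x : ℝ := (2 * (⌊r⌋₊ : ℝ) + 1) * θ
  have h3 : Real.cos θ ≤ Real.cos |x - π / 2| := by
    apply Real.cos_le_cos_of_nonneg_of_le_pi (abs_nonneg _) (by linarith [Real.pi_pos]) habs
  rw [Real.cos_abs, Real.cos_sub_pi_div_two] at h3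
  have hc : 0 ≤ Real.cos θ := Real.cos_nonneg_of_mem_Icc ⟨by linarith, h2⟩
  exact pow_le_pow_left₀ hc h3 2
end

section
/- Lower bound direction (conditional composition): assume Paturi's theorem deg_{1/3}(f) = Θ(√(t(f)·n)) for symmetric Boolean f, and the OR bound deg_ε(OR_m) = Ω(√(m·log(1/ε))) for ε ∈ [2^{−m}, 1/3]. Then for any non-constant symmetric f : {0,1}^n → {0,1} with t(f) < n/4 and ε ∈ [2^{−n/2}, 1/3], deg_ε(f) = Ω(deg_{1/3}(f) + √(n·log(1/ε))), using that an OR on at least n/2 variables embeds into f by restriction. -/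
open Finset Real

/-- The n-bit OR function, as a real-valued function on the Boolean cube. -/
noncomputable def ORf (m : ℕ) : (Fin m → Bool) → ℝ :=
  fun x => if ∃ i, x i = true then 1 else 0

lemma prodChi {m : ℕ} (y : Fin m → Bool) (S : Finset (Fin m)) :
    ∏ i ∈ S, (if y i then (1:ℝ) else 0) = if ∀ i ∈ S, y i = true then 1 else 0 := by
  simp [Finset.prod_boole]

lemma sum_pow_neg_one {α : Type*} [DecidableEq α] (x : Finset α) :
    (∑ T ∈ x.powerset, (-1 : ℝ) ^ T.card) = if x = ∅ then 1 else 0 := by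
  have h := Finset.sum_powerset_neg_one_pow_card (x := x)
  have h2 : ((∑ T ∈ x.powerset, (-1 : ℤ) ^ T.card : ℤ) : ℝ)
      = ((if x = ∅ then 1 else 0 : ℤ) : ℝ) := by rw [h]
  push_cast at h2
  split_ifs with hx <;> simp [hx] at h2 ⊢ <;> exact h2

lemma AD_inner_sum {n : ℕ} (X T : Finset (Fin n)) (hT : T ⊆ X) (g : Finset (Fin n) → ℝ) :
    ∑ S ∈ X.powerset, (if T ⊆ S then (-1:ℝ)^S.card * ((-1:ℝ)^T.card * g T) else 0)
      = (if T = X then (1:ℝ) else 0) * g T := by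
  classical
  rw [← Finset.sum_filter]
  have hre : ∑ S ∈ X.powerset.filter (fun S => T ⊆ S), (-1:ℝ)^S.card
      = ∑ R ∈ (X \ T).powerset, (-1:ℝ)^(T.card + R.card) := by
    refine Finset.sum_nbij' (fun S => S \ T) (fun R => T ∪ R) ?_ ?_ ?_ ?_ ?_
    · intro S hS
      simp only [Finset.mem_filter, Finset.mem_powerset] at hS ⊢
      exact Finset.sdiff_subset_sdiff hS.1 Finset.Subset.rfl
    · intro R hR
      simp only [Finset.mem_filter, Finset.mem_powerset] at hR ⊢
      exact ⟨Finset.union_subset hT (hR.trans (Finset.sdiff_subset)),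
        Finset.subset_union_left⟩
    · intro S hS
      simp only [Finset.mem_filter, Finset.mem_powerset] at hS
      exact Finset.union_sdiff_of_subset hS.2
    · intro R hR
      simp only [Finset.mem_powerset] at hR
      have hd : Disjoint T R := ((Finset.subset_sdiff.mp hR)).2.symm
      exact Finset.union_sdiff_cancel_left hd
    · intro S hS
      simp only [Finset.mem_filter, Finset.mem_powerset] at hS
      have hd : Disjoint T (S \ T) := Finset.disjoint_sdiff
      rw [← Finset.card_union_of_disjoint hd, Finset.union_sdiff_of_subset hS.2]
  have key : ∑ S ∈ X.powerset.filter (fun S => T ⊆ S),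
      ((-1:ℝ)^S.card * ((-1:ℝ)^T.card * g T))
      = (∑ S ∈ X.powerset.filter (fun S => T ⊆ S), (-1:ℝ)^S.card) * ((-1:ℝ)^T.card * g T) :=
    (Finset.sum_mul _ _ _).symm
  rw [key, hre]
  have : ∑ R ∈ (X \ T).powerset, (-1:ℝ)^(T.card + R.card)
      = (-1:ℝ)^T.card * (if X \ T = ∅ then 1 else 0) := by
    rw [← sum_pow_neg_one (X \ T), Finset.mul_sum]
    exact Finset.sum_congr rfl fun R _ => by rw [pow_add]
  rw [this]
  have heq : (X \ T = ∅) ↔ (T = X) := by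
    rw [Finset.sdiff_eq_empty_iff_subset]
    exact ⟨fun h => Finset.Subset.antisymm hT h, fun h => h ▸ Finset.Subset.rfl⟩
  have hpow : (-1:ℝ)^T.card * (-1:ℝ)^T.card = 1 := by
    rw [← pow_add]
    exact Even.neg_one_pow ⟨T.card, rfl⟩
  split_ifs with h1 h2 h2
  · linear_combination g T * hpow
  · exact absurd (heq.mp h1) h2
  · exact absurd (heq.mpr h2) h1
  · ring

lemma exists_exact (n : ℕ) (f : (Fin n → Bool) → ℝ) :
    ∃ a : Finset (Fin n) → ℝ, ∀ x, evalML n a x = f x := by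
  classical
  set g : Finset (Fin n) → ℝ := fun T => f (fun i => decide (i ∈ T)) with hg
  refine ⟨fun S => (-1:ℝ)^S.card * ∑ T ∈ S.powerset, (-1:ℝ)^T.card * g T, fun x => ?_⟩
  set X : Finset (Fin n) := univ.filter (fun i => x i = true) with hX
  have hfx : f x = g X := by
    rw [hg]
    congr 1
    funext i
    simp [hX]
  have hps : Finset.univ.filter (fun S : Finset (Fin n) => S ⊆ X) = X.powerset := by
    ext T; simp
  rw [evalML, hfx]
  calc ∑ S : Finset (Fin n), ((-1:ℝ)^S.card * ∑ T ∈ S.powerset, (-1:ℝ)^T.card * g T)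
        * ∏ i ∈ S, (if x i then (1:ℝ) else 0)
      = ∑ S ∈ X.powerset, (-1:ℝ)^S.card * ∑ T ∈ S.powerset, (-1:ℝ)^T.card * g T := by
        rw [← hps, Finset.sum_filter]
        refine Finset.sum_congr rfl fun S _ => ?_
        rw [prodChi]
        have : (∀ i ∈ S, x i = true) ↔ S ⊆ X := by
          simp [hX, Finset.subset_iff]
        split_ifs with h1 h2 h2
        · ring
        · exact absurd (this.mp h1) h2
        · exact absurd (this.mpr h2) h1
        · ring
    _ = ∑ S ∈ X.powerset, ∑ T ∈ X.powerset,
          if T ⊆ S then (-1:ℝ)^S.card * ((-1:ℝ)^T.card * g T) else 0 := by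
        refine Finset.sum_congr rfl fun S hS => ?_
        rw [Finset.mul_sum]
        have hSX : S ⊆ X := Finset.mem_powerset.mp hS
        have : S.powerset = X.powerset.filter (fun T => T ⊆ S) := by
          ext T
          simp only [Finset.mem_powerset, Finset.mem_filter]
          exact ⟨fun h => ⟨h.trans hSX, h⟩, fun h => h.2⟩
        rw [this, Finset.sum_filter]
    _ = ∑ T ∈ X.powerset, ∑ S ∈ X.powerset,
          if T ⊆ S then (-1:ℝ)^S.card * ((-1:ℝ)^T.card * g T) else 0 := Finset.sum_comm
    _ = ∑ T ∈ X.powerset, (if T = X then (1:ℝ) else 0) * g T := by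
        refine Finset.sum_congr rfl fun T hT => ?_
        exact AD_inner_sum X T (Finset.mem_powerset.mp hT) g
    _ = g X := by
        have hstep : ∀ T ∈ X.powerset,
            (if T = X then (1:ℝ) else 0) * g T = if T = X then g T else 0 := by
          intro T _
          split_ifs <;> ring
        rw [Finset.sum_congr rfl hstep, Finset.sum_ite_eq' X.powerset X (fun T => g T)]
        simp


lemma degEps_nonempty (n : ℕ) (ε : ℝ) (hε : 0 ≤ ε) (f : (Fin n → Bool) → ℝ) :
    {d | ∃ a : Finset (Fin n) → ℝ,
      (∀ S, a S ≠ 0 → S.card ≤ d) ∧ ∀ x, |evalML n a x - f x| ≤ ε}.Nonempty := by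
  obtain ⟨a, ha⟩ := exists_exact n f
  exact ⟨n, a, fun S _ => by
    simpa using (Finset.card_le_univ S).trans_eq (by simp), fun x => by simp [ha x, hε]⟩

lemma degEps_spec (n : ℕ) (ε : ℝ) (hε : 0 ≤ ε) (f : (Fin n → Bool) → ℝ) :
    ∃ a : Finset (Fin n) → ℝ,
      (∀ S, a S ≠ 0 → S.card ≤ degEps n ε f) ∧ ∀ x, |evalML n a x - f x| ≤ ε :=
  Nat.sInf_mem (degEps_nonempty n ε hε f)

lemma degEps_mono (n : ℕ) (ε ε' : ℝ) (hε : 0 ≤ ε) (hεε' : ε ≤ ε') (f : (Fin n → Bool) → ℝ) :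
    degEps n ε' f ≤ degEps n ε f := by
  obtain ⟨a, ha, hap⟩ := degEps_spec n ε hε f
  exact Nat.sInf_le ⟨a, ha, fun x => (hap x).trans hεε'⟩

/-- the restriction embedding: first `m` coordinates free, then `k` ones, rest zeros. -/
def eRestr (n m k : ℕ) (y : Fin m → Bool) : Fin n → Bool :=
  fun j => if h : (j : ℕ) < m then y ⟨j, h⟩ else decide ((j : ℕ) < m + k)

lemma degEps_restrict (n m k : ℕ) (hm : m ≤ n) (ε : ℝ) (hε : 0 ≤ ε)
    (f : (Fin n → Bool) → ℝ) :
    degEps m ε (fun y => f (eRestr n m k y)) ≤ degEps n ε f := by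
  classical
  obtain ⟨a, ha, hap⟩ := degEps_spec n ε hε f
  set Φ : Finset (Fin n) → Finset (Fin m) :=
    fun S => univ.filter (fun i : Fin m => (⟨(i : ℕ), lt_of_lt_of_le i.2 hm⟩ : Fin n) ∈ S)
    with hΦ
  set w : Finset (Fin n) → ℝ :=
    fun S => ∏ j ∈ S.filter (fun j : Fin n => ¬ (j : ℕ) < m),
      (if (j : ℕ) < m + k then (1:ℝ) else 0) with hw
  set b : Finset (Fin m) → ℝ :=
    fun U => ∑ S ∈ univ.filter (fun S : Finset (Fin n) => Φ S = U), a S * w S with hb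
  have keyprod : ∀ (S : Finset (Fin n)) (y : Fin m → Bool),
      ∏ j ∈ S, (if eRestr n m k y j then (1:ℝ) else 0)
        = w S * ∏ i ∈ Φ S, (if y i then (1:ℝ) else 0) := by
    intro S y
    rw [← Finset.prod_filter_mul_prod_filter_not S (fun j : Fin n => (j : ℕ) < m)]
    rw [mul_comm (w S)]
    congr 1
    · -- free part
      refine Finset.prod_nbij (fun i : Fin m => (⟨(i : ℕ), lt_of_lt_of_le i.2 hm⟩ : Fin n))
        ?_ ?_ ?_ ?_ |>.symm
      · intro i hi
        simp only [hΦ, Finset.mem_filter, Finset.mem_univ, true_and] at hi ⊢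
        exact ⟨hi, i.2⟩
      · intro i _ i' _ h
        simpa [Fin.ext_iff] using congrArg Fin.val h
      · intro j hj
        simp only [Finset.mem_filter, Finset.coe_filter, Set.mem_image, Set.mem_setOf_eq] at hj ⊢
        obtain ⟨hjS, hjm⟩ := hj
        exact ⟨⟨(j : ℕ), hjm⟩, by simpa [hΦ] using hjS, rfl⟩
      · intro i hi
        simp only [eRestr]
        rw [dif_pos i.2]
    · -- fixed part
      exact Finset.prod_congr rfl fun j hj => by
        simp only [Finset.mem_filter] at hj
        simp [eRestr, dif_neg hj.2]
  have heval : ∀ y, evalML m b y = evalML n a (eRestr n m k y) := by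
    intro y
    rw [evalML, evalML]
    calc ∑ U : Finset (Fin m), b U * ∏ i ∈ U, (if y i then (1:ℝ) else 0)
        = ∑ U : Finset (Fin m), ∑ S ∈ univ.filter (fun S : Finset (Fin n) => Φ S = U),
            a S * w S * ∏ i ∈ Φ S, (if y i then (1:ℝ) else 0) := by
          refine Finset.sum_congr rfl fun U _ => ?_
          rw [hb, Finset.sum_mul]
          exact Finset.sum_congr rfl fun S hS => by
            rw [(Finset.mem_filter.mp hS).2]
      _ = ∑ S : Finset (Fin n), a S * w S * ∏ i ∈ Φ S, (if y i then (1:ℝ) else 0) :=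
          Finset.sum_fiberwise _ _ _
      _ = ∑ S : Finset (Fin n), a S * ∏ j ∈ S, (if eRestr n m k y j then (1:ℝ) else 0) := by
          refine Finset.sum_congr rfl fun S _ => ?_
          rw [keyprod S y]; ring
  refine Nat.sInf_le ⟨b, fun U hU => ?_, fun y => by rw [heval y]; exact hap _⟩
  obtain ⟨S, hS, hSne⟩ := Finset.exists_ne_zero_of_sum_ne_zero (hb ▸ hU)
  have haS : a S ≠ 0 := left_ne_zero_of_mul hSne
  have hcard : U.card ≤ S.card := by
    rw [← (Finset.mem_filter.mp hS).2]
    refine Finset.card_le_card_of_injOn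
      (fun i : Fin m => (⟨(i : ℕ), lt_of_lt_of_le i.2 hm⟩ : Fin n)) ?_ ?_
    · intro i hi
      simpa [hΦ] using (Finset.mem_filter.mp hi).2
    · intro i _ i' _ h
      simpa [Fin.ext_iff] using congrArg Fin.val h
  exact hcard.trans (ha S haS)


lemma degEps_one_sub (m : ℕ) (ε : ℝ) (hε : 0 ≤ ε) (g : (Fin m → Bool) → ℝ) :
    degEps m ε (fun y => 1 - g y) ≤ degEps m ε g := by
  classical
  obtain ⟨b, hb, hbp⟩ := degEps_spec m ε hε g
  set b' : Finset (Fin m) → ℝ := fun U => (if U = ∅ then 1 else 0) - b U with hb'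
  have heval : ∀ y, evalML m b' y = 1 - evalML m b y := by
    intro y
    rw [evalML, evalML]
    have h1 : ∑ U : Finset (Fin m), (if U = ∅ then (1:ℝ) else 0) * ∏ i ∈ U,
        (if y i then (1:ℝ) else 0) = 1 := by
      rw [Finset.sum_eq_single (∅ : Finset (Fin m))]
      · simp
      · intro U _ hU; simp [hU]
      · intro h; exact absurd (Finset.mem_univ _) h
    calc ∑ U : Finset (Fin m), b' U * ∏ i ∈ U, (if y i then (1:ℝ) else 0)
        = ∑ U : Finset (Fin m), ((if U = ∅ then (1:ℝ) else 0) * ∏ i ∈ U,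
            (if y i then (1:ℝ) else 0)
          - b U * ∏ i ∈ U, (if y i then (1:ℝ) else 0)) := by
          refine Finset.sum_congr rfl fun U _ => ?_
          rw [hb']; ring
      _ = 1 - ∑ U : Finset (Fin m), b U * ∏ i ∈ U, (if y i then (1:ℝ) else 0) := by
          rw [Finset.sum_sub_distrib, h1]
  refine Nat.sInf_le ⟨b', fun U hU => ?_, fun y => ?_⟩
  · by_cases hUe : U = ∅
    · simp [hUe]
    · have : b U ≠ 0 := by
        intro h; apply hU; rw [hb']; simp [hUe, h]
      exact hb U this
  · rw [heval y]
    have h2 : (1 - evalML m b y) - (1 - g y) = -(evalML m b y - g y) := by ring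
    rw [h2, abs_neg]
    exact hbp y

lemma degEps_comp_not (m : ℕ) (ε : ℝ) (hε : 0 ≤ ε) (g : (Fin m → Bool) → ℝ) :
    degEps m ε (fun y => g (fun i => !y i)) ≤ degEps m ε g := by
  classical
  obtain ⟨b, hb, hbp⟩ := degEps_spec m ε hε g
  set b' : Finset (Fin m) → ℝ :=
    fun U => (-1:ℝ)^U.card * ∑ V ∈ univ.filter (fun V : Finset (Fin m) => U ⊆ V), b V with hb'
  have heval : ∀ y, evalML m b' y = evalML m b (fun i => !y i) := by
    intro y
    rw [evalML, evalML]
    refine Eq.symm ?_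
    have hprod : ∀ V : Finset (Fin m),
        ∏ i ∈ V, (if (!y i) = true then (1:ℝ) else 0)
          = ∑ U ∈ V.powerset, (-1:ℝ)^U.card * ∏ i ∈ U, (if y i then (1:ℝ) else 0) := by
      intro V
      have : ∀ i : Fin m, (if (!y i) = true then (1:ℝ) else 0)
          = (fun i => -(if y i then (1:ℝ) else 0)) i + (fun _ => (1:ℝ)) i := by
        intro i; cases hyi : y i <;> simp [hyi]
      rw [Finset.prod_congr rfl (fun i _ => this i), Finset.prod_add]
      refine Finset.sum_congr rfl fun U _ => ?_
      rw [Finset.prod_const_one, mul_one]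
      calc ∏ i ∈ U, -(if y i = true then (1:ℝ) else 0)
          = ∏ i ∈ U, ((-1) * (if y i = true then (1:ℝ) else 0)) := by
            exact Finset.prod_congr rfl fun i _ => (neg_one_mul _).symm
        _ = (∏ _i ∈ U, (-1:ℝ)) * ∏ i ∈ U, (if y i = true then (1:ℝ) else 0) :=
            Finset.prod_mul_distrib
        _ = (-1:ℝ)^U.card * ∏ i ∈ U, (if y i = true then (1:ℝ) else 0) := by
            rw [Finset.prod_const]
    calc ∑ V : Finset (Fin m), b V * ∏ i ∈ V, (if (!y i) = true then (1:ℝ) else 0)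
        = ∑ V : Finset (Fin m), ∑ U : Finset (Fin m),
            (if U ⊆ V then b V * ((-1:ℝ)^U.card * ∏ i ∈ U, (if y i then (1:ℝ) else 0)) else 0)
            := by
          refine Finset.sum_congr rfl fun V _ => ?_
          rw [hprod V, Finset.mul_sum]
          have : V.powerset = univ.filter (fun U : Finset (Fin m) => U ⊆ V) := by
            ext U; simp
          rw [this, Finset.sum_filter]
      _ = ∑ U : Finset (Fin m), ∑ V : Finset (Fin m),
            (if U ⊆ V then b V * ((-1:ℝ)^U.card * ∏ i ∈ U, (if y i then (1:ℝ) else 0)) else 0)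
            := Finset.sum_comm
      _ = ∑ U : Finset (Fin m), b' U * ∏ i ∈ U, (if y i then (1:ℝ) else 0) := by
          refine Finset.sum_congr rfl fun U _ => ?_
          rw [← Finset.sum_filter]
          simp only [hb', Finset.mul_sum, Finset.sum_mul]
          exact Finset.sum_congr rfl fun V _ => by ring
  refine Nat.sInf_le ⟨b', fun U hU => ?_, fun y => by rw [heval y]; exact hbp _⟩
  have : ∑ V ∈ univ.filter (fun V : Finset (Fin m) => U ⊆ V), b V ≠ 0 := by
    intro h; apply hU; simp only [hb']; rw [h, mul_zero]
  obtain ⟨V, hV, hVne⟩ := Finset.exists_ne_zero_of_sum_ne_zero this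
  exact (Finset.card_le_card (Finset.mem_filter.mp hV).2).trans (hb V hVne)


lemma wt_le {m : ℕ} (y : Fin m → Bool) : wt y ≤ m := by
  rw [wt]
  exact (Finset.card_filter_le _ _).trans (by simp)

lemma wt_eq_zero_iff {m : ℕ} (y : Fin m → Bool) : wt y = 0 ↔ ∀ i, y i ≠ true := by
  rw [wt, Finset.card_eq_zero, Finset.filter_eq_empty_iff]
  simp

lemma wt_comp {m : ℕ} (y : Fin m → Bool) : wt (fun i => !y i) + wt y = m := by
  have h := Finset.card_filter_add_card_filter_not
    (s := (Finset.univ : Finset (Fin m))) (p := fun i => y i = true)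
  rw [wt, wt]
  have h2 : (Finset.univ.filter (fun i : Fin m => (!y i) = true))
      = Finset.univ.filter (fun i : Fin m => ¬ (y i = true)) := by
    ext i; simp
  rw [h2, add_comm]
  simpa using h

lemma wt_eRestr (n m k : ℕ) (hmk : m + k ≤ n) (y : Fin m → Bool) :
    wt (eRestr n m k y) = wt y + k := by
  classical
  have hmn : m ≤ n := le_trans (Nat.le_add_right m k) hmk
  rw [wt]
  have hsplit := Finset.card_filter_add_card_filter_not
    (s := Finset.univ.filter (fun j : Fin n => eRestr n m k y j = true))
    (p := fun j : Fin n => (j : ℕ) < m)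
  rw [← hsplit, Finset.filter_filter, Finset.filter_filter]
  congr 1
  · -- equals wt y
    rw [wt]
    refine (Finset.card_nbij (fun i : Fin m => (⟨(i : ℕ), lt_of_lt_of_le i.2 hmn⟩ : Fin n))
      ?_ ?_ ?_).symm
    · intro i hi
      simp only [Finset.mem_coe, Finset.mem_filter, Finset.mem_univ, true_and] at hi ⊢
      refine ⟨?_, i.2⟩
      simp only [eRestr, dif_pos i.2]
      simpa using hi
    · intro i _ i' _ h
      simpa [Fin.ext_iff] using congrArg Fin.val h
    · intro j hj
      simp only [Finset.mem_coe, Finset.mem_filter, Finset.mem_univ, true_and,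
        Set.mem_image, Set.mem_setOf_eq, Finset.coe_filter] at hj ⊢
      obtain ⟨hje, hjm⟩ := hj
      refine ⟨⟨(j : ℕ), hjm⟩, ?_, rfl⟩
      simpa [eRestr, dif_pos hjm] using hje
  · -- equals k
    have hcard : (Finset.univ.filter
        (fun j : Fin n => eRestr n m k y j = true ∧ ¬ (j : ℕ) < m)).card
        = (Finset.Ico m (m + k)).card := by
      refine Finset.card_nbij (fun j : Fin n => (j : ℕ)) ?_ ?_ ?_
      · intro j hj
        simp only [Finset.mem_coe, Finset.mem_filter, Finset.mem_univ, true_and] at hj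
        obtain ⟨hje, hjm⟩ := hj
        simp only [Finset.mem_coe, Finset.mem_Ico, Finset.coe_Ico, Set.mem_Ico]
        have : ((j : ℕ) < m + k) := by
          simpa [eRestr, dif_neg hjm] using hje
        exact ⟨Nat.le_of_not_lt hjm, this⟩
      · intro j _ j' _ h
        exact Fin.ext h
      · intro x hx
        simp only [Finset.mem_coe, Finset.mem_Ico, Finset.coe_Ico, Set.mem_Ico] at hx
        have hxn : x < n := lt_of_lt_of_le hx.2 hmk
        refine ⟨⟨x, hxn⟩, ?_, rfl⟩
        simp only [Finset.mem_coe, Finset.mem_filter, Finset.mem_univ, true_and]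
        have hnm : ¬ (x < m) := Nat.not_lt.mpr hx.1
        exact ⟨by simpa [eRestr, dif_neg hnm] using hx.2, hnm⟩
    rw [hcard, Nat.card_Ico]
    omega


/-- Lower bound direction: assuming Paturi's theorem `deg_{1/3}(f) = Θ(√(t(f)·n))`
and the OR bound `deg_ε(OR_m) = Ω(√(m·log(1/ε)))` for `ε ∈ [2^{−m},1/3]`, every
non-constant symmetric Boolean `f` with `t(f) < n/4` satisfies, for
`ε ∈ [2^{−n/2},1/3]`, `deg_ε(f) = Ω(deg_{1/3}(f) + √(n·log(1/ε)))`. -/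
theorem degEps_lower_bound (c₁ C₁ c₂ : ℝ) (hc₁ : 0 < c₁) (hC₁ : 0 < C₁) (hc₂ : 0 < c₂)
    (paturi : ∀ (n t : ℕ) (f : (Fin n → Bool) → ℝ) (F : ℕ → ℝ),
      (∀ x, f x = F (wt x)) → (∀ x, f x = 0 ∨ f x = 1) → (∃ x y, f x ≠ f y) →
      0 < t → 2 * t ≤ n →
      (∀ k l, t ≤ k → k ≤ n - t → t ≤ l → l ≤ n - t → F k = F l) →
      (∀ t', 0 < t' → t' < t →
        ¬ (∀ k l, t' ≤ k → k ≤ n - t' → t' ≤ l → l ≤ n - t' → F k = F l)) →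
      c₁ * Real.sqrt ((t : ℝ) * n) ≤ (degEps n (1/3) f : ℝ) ∧
        (degEps n (1/3) f : ℝ) ≤ C₁ * Real.sqrt ((t : ℝ) * n))
    (orbound : ∀ (m : ℕ) (ε : ℝ), (2 : ℝ) ^ (-(m : ℝ)) ≤ ε → ε ≤ 1/3 →
      c₂ * Real.sqrt ((m : ℝ) * Real.log (1 / ε)) ≤ (degEps m ε (ORf m) : ℝ)) :
    ∃ c > (0 : ℝ), ∀ (n t : ℕ) (f : (Fin n → Bool) → ℝ) (F : ℕ → ℝ),
      (∀ x, f x = F (wt x)) → (∀ x, f x = 0 ∨ f x = 1) → (∃ x y, f x ≠ f y) →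
      0 < t → 4 * t < n →
      (∀ k l, t ≤ k → k ≤ n - t → t ≤ l → l ≤ n - t → F k = F l) →
      (∀ t', 0 < t' → t' < t →
        ¬ (∀ k l, t' ≤ k → k ≤ n - t' → t' ≤ l → l ≤ n - t' → F k = F l)) →
      ∀ ε : ℝ, (2 : ℝ) ^ (-(n : ℝ) / 2) ≤ ε → ε ≤ 1/3 →
        c * ((degEps n (1/3) f : ℝ) + Real.sqrt ((n : ℝ) * Real.log (1 / ε)))
          ≤ (degEps n ε f : ℝ) := by
  clear paturi hc₁ hC₁
  have hs2 : (0:ℝ) < Real.sqrt 2 := Real.sqrt_pos.mpr two_pos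
  refine ⟨min 1 (c₂ / Real.sqrt 2) / 2, by positivity, ?_⟩
  intro n t f F hsym h01 hne ht h4t hconst hmin ε hεlow hεhigh
  have hε0 : 0 < ε := lt_of_lt_of_le (Real.rpow_pos_of_pos two_pos _) hεlow
  set m := n - 2*t with hm
  have h2t : 2*t ≤ n := by omega
  have hmn : m ≤ n := by omega
  have hm1 : 1 ≤ m := by omega
  set L := Real.log (1/ε) with hL
  have hL0 : 0 ≤ L := Real.log_nonneg (by rw [le_div_iff₀ hε0]; linarith)
  -- real cast facts
  have hmr : (m:ℝ) = (n:ℝ) - 2*(t:ℝ) := by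
    rw [hm]; push_cast [Nat.cast_sub h2t]; ring
  have h4tr : 4*(t:ℝ) < (n:ℝ) := by exact_mod_cast h4t
  have hm_real : (n:ℝ)/2 ≤ (m:ℝ) := by rw [hmr]; linarith
  -- F takes boolean values on [0,n]
  have hF01 : ∀ w, w ≤ n → F w = 0 ∨ F w = 1 := by
    intro w hw
    have hwt : wt (eRestr n 0 w (fun i => i.elim0)) = w := by
      rw [wt_eRestr n 0 w (by omega)]
      have : wt (fun i : Fin 0 => i.elim0) = 0 := by simp [wt]
      omega
    have := h01 (eRestr n 0 w (fun i => i.elim0))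
    rwa [hsym, hwt] at this
  -- case analysis at the boundary
  have hcase : F t ≠ F (t-1) ∨ F (n-t) ≠ F (n-t+1) := by
    by_contra hcon
    push_neg at hcon
    obtain ⟨h1, h2⟩ := hcon
    rcases Nat.lt_or_ge t 2 with ht2 | ht2
    · -- t = 1 : f constant, contradiction
      have ht1 : t = 1 := by omega
      obtain ⟨x, y, hxy⟩ := hne
      apply hxy
      rw [hsym x, hsym y]
      have hall : ∀ w, w ≤ n → F w = F 1 := by
        intro w hw
        rcases Nat.eq_zero_or_pos w with h0 | h0
        · subst h0
          have : F t = F (t-1) := h1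
          rw [ht1] at this
          simpa using this.symm
        · rcases Nat.lt_or_ge w n with hwn | hwn
          · exact hconst w 1 (by omega) (by omega) (by omega) (by omega)
          · have hwn' : w = n := by omega
            rw [hwn']
            have hnt : F (n-t) = F (n-t+1) := h2
            rw [ht1] at hnt
            have hn1 : n - 1 + 1 = n := by omega
            rw [hn1] at hnt
            rw [← hnt]
            exact hconst (n-1) 1 (by omega) (by omega) (by omega) (by omega)
      rw [hall _ (wt_le x), hall _ (wt_le y)]
    · -- t ≥ 2 : contradict minimality at t-1
      apply hmin (t-1) (by omega) (by omega)
      intro k l hk hkn hl hln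
      have key : ∀ j, t-1 ≤ j → j ≤ n - (t-1) → F j = F t := by
        intro j hj1 hj2
        rcases Nat.lt_or_ge j t with hjt | hjt
        · have : j = t - 1 := by omega
          rw [this]; exact h1.symm
        · rcases Nat.lt_or_ge j (n - t + 1) with hlt | hge
          · exact hconst j t hjt (by omega) (by omega) (by omega)
          · have hj : j = n - t + 1 := by omega
            rw [hj, ← h2]
            exact hconst (n-t) t (by omega) (by omega) (by omega) (by omega)
      rw [key k hk hkn, key l hl hln]
  -- the key OR reduction
  have hOR : degEps m ε (ORf m) ≤ degEps n ε f := by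
    rcases hcase with hA | hB
    · -- F t ≠ F (t-1) : restrict with t-1 fixed ones
      have hg1 : ∀ y : Fin m → Bool,
          f (eRestr n m (t-1) y) = if wt y = 0 then F (t-1) else F t := by
        intro y
        rw [hsym, wt_eRestr n m (t-1) (by omega)]
        by_cases h0 : wt y = 0
        · rw [if_pos h0, h0, zero_add]
        · rw [if_neg h0]
          exact hconst (wt y + (t-1)) t (by omega)
            (by have := wt_le y; omega) (by omega) (by omega)
      have hv0 := hF01 (t-1) (by omega)
      have hv1 := hF01 t (by omega)
      have hiff : ∀ y : Fin m → Bool, (∃ i, y i = true) ↔ ¬ wt y = 0 := by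
        intro y
        rw [wt_eq_zero_iff]
        push_neg
        rfl
      rcases hv0 with hv0 | hv0 <;> rcases hv1 with hv1 | hv1
      · exact absurd (hv1.trans hv0.symm) hA
      · -- g1 = OR
        have heq : (fun y => f (eRestr n m (t-1) y)) = ORf m := by
          funext y
          rw [hg1 y, ORf]
          by_cases h0 : wt y = 0
          · rw [if_pos h0, if_neg (by rw [hiff y]; exact not_not_intro h0), hv0]
          · rw [if_neg h0, if_pos ((hiff y).mpr h0), hv1]
        rw [← heq]
        exact degEps_restrict n m (t-1) hmn ε hε0.le f
      · -- OR = 1 - g1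
        have heq : ORf m = (fun y => 1 - (fun z => f (eRestr n m (t-1) z)) y) := by
          funext y
          simp only [ORf]
          rw [hg1 y]
          by_cases h0 : wt y = 0
          · rw [if_pos h0, if_neg (by rw [hiff y]; exact not_not_intro h0), hv0]; norm_num
          · rw [if_neg h0, if_pos ((hiff y).mpr h0), hv1]; norm_num
        rw [heq]
        exact (degEps_one_sub m ε hε0.le _).trans
          (degEps_restrict n m (t-1) hmn ε hε0.le f)
      · exact absurd (hv1.trans hv0.symm) hA
    · -- F (n-t) ≠ F (n-t+1) : restrict with t+1 fixed ones and complement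
      have hFt : F (n-t) = F t :=
        hconst (n-t) t (by omega) (by omega) (by omega) (by omega)
      have hA' : F t ≠ F (n-t+1) := fun h => hB (hFt.trans h)
      have hg2 : ∀ y : Fin m → Bool,
          f (eRestr n m (t+1) (fun i => !y i)) = if wt y = 0 then F (n-t+1) else F t := by
        intro y
        rw [hsym, wt_eRestr n m (t+1) (by omega)]
        have hc := wt_comp y
        by_cases h0 : wt y = 0
        · rw [if_pos h0]
          have : wt (fun i => !y i) + (t+1) = n - t + 1 := by omega
          rw [this]
        · rw [if_neg h0]
          have h0' : 1 ≤ wt y := Nat.pos_of_ne_zero h0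
          exact hconst (wt (fun i => !y i) + (t+1)) t (by omega) (by omega)
            (by omega) (by omega)
      have hv0 := hF01 (n-t+1) (by omega)
      have hv1 := hF01 t (by omega)
      have hiff : ∀ y : Fin m → Bool, (∃ i, y i = true) ↔ ¬ wt y = 0 := by
        intro y
        rw [wt_eq_zero_iff]
        push_neg
        rfl
      have hchain : degEps m ε (fun y => f (eRestr n m (t+1) (fun i => !y i)))
          ≤ degEps n ε f :=
        (degEps_comp_not m ε hε0.le (fun z => f (eRestr n m (t+1) z))).trans
          (degEps_restrict n m (t+1) hmn ε hε0.le f)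
      rcases hv0 with hv0 | hv0 <;> rcases hv1 with hv1 | hv1
      · exact absurd (hv1.trans hv0.symm) hA'
      · have heq : (fun y => f (eRestr n m (t+1) (fun i => !y i))) = ORf m := by
          funext y
          rw [hg2 y, ORf]
          by_cases h0 : wt y = 0
          · rw [if_pos h0, if_neg (by rw [hiff y]; exact not_not_intro h0), hv0]
          · rw [if_neg h0, if_pos ((hiff y).mpr h0), hv1]
        rw [← heq]
        exact hchain
      · have heq : ORf m
            = (fun y => 1 - (fun z => f (eRestr n m (t+1) (fun i => !z i))) y) := by
          funext y
          simp only [ORf]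
          rw [hg2 y]
          by_cases h0 : wt y = 0
          · rw [if_pos h0, if_neg (by rw [hiff y]; exact not_not_intro h0), hv0]; norm_num
          · rw [if_neg h0, if_pos ((hiff y).mpr h0), hv1]; norm_num
        rw [heq]
        exact (degEps_one_sub m ε hε0.le _).trans hchain
      · exact absurd (hv1.trans hv0.symm) hA'
  -- OR lower bound via orbound
  have hεm : (2:ℝ) ^ (-(m:ℝ)) ≤ ε := by
    refine le_trans ?_ hεlow
    apply Real.rpow_le_rpow_of_exponent_le (by norm_num)
    linarith
  have h3 := orbound m ε hεm hεhigh
  -- sqrt comparison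
  have hsq : Real.sqrt ((n:ℝ) * L) ≤ Real.sqrt ((m:ℝ) * L) * Real.sqrt 2 := by
    have h1 : Real.sqrt ((n:ℝ)*L/2) ≤ Real.sqrt ((m:ℝ)*L) := by
      apply Real.sqrt_le_sqrt
      nlinarith
    have h2 : Real.sqrt ((n:ℝ)*L/2) = Real.sqrt ((n:ℝ)*L) / Real.sqrt 2 :=
      Real.sqrt_div (by positivity) 2
    rw [h2] at h1
    exact (div_le_iff₀ hs2).mp h1
  -- combine everything
  have hD1 : (degEps n (1/3) f : ℝ) ≤ (degEps n ε f : ℝ) :=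
    Nat.cast_le.mpr (degEps_mono n ε (1/3) hε0.le hεhigh f)
  have hD2 : c₂ * Real.sqrt ((m:ℝ) * L) ≤ (degEps n ε f : ℝ) :=
    h3.trans (Nat.cast_le.mpr hOR)
  set A := (degEps n (1/3) f : ℝ) with hA
  set D := (degEps n ε f : ℝ) with hD
  set B := Real.sqrt ((n:ℝ) * L) with hBdef
  have hA0 : 0 ≤ A := Nat.cast_nonneg _
  have hB0 : 0 ≤ B := Real.sqrt_nonneg _
  have hcb : (c₂ / Real.sqrt 2) * B ≤ D := by
    have h4 : (c₂ / Real.sqrt 2) * B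
        ≤ (c₂ / Real.sqrt 2) * (Real.sqrt ((m:ℝ)*L) * Real.sqrt 2) :=
      mul_le_mul_of_nonneg_left hsq (by positivity)
    have h5 : (c₂ / Real.sqrt 2) * (Real.sqrt ((m:ℝ)*L) * Real.sqrt 2)
        = c₂ * Real.sqrt ((m:ℝ)*L) := by
      field_simp
    rw [h5] at h4
    exact h4.trans hD2
  have hμ1 : min 1 (c₂ / Real.sqrt 2) ≤ 1 := min_le_left _ _
  have hμ2 : min 1 (c₂ / Real.sqrt 2) ≤ c₂ / Real.sqrt 2 := min_le_right _ _
  nlinarith [mul_le_mul_of_nonneg_right hμ1 hA0, mul_le_mul_of_nonneg_right hμ2 hB0]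
end
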